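/- Let h : ℕ_{>0} → ℝ satisfy |h(m)| ≤ M for all m ≥ 1 (for some real M), and suppose the series Σ_{r=1}^{∞} h(r)/(r+z) converges absolutely for every complex z (the term with vanishing denominator omitted when z is a negative integer). Let N, k ≥ 1 be naturals and t > 0 real. Then the following sums all converge absolutely: the four double sums Σ_{r=1}^{∞} Σ_{a=1}^{∞} (−1)^r·h(a)·G_{r−N,t,k}/cosh(π(r−a)/(2t)), Σ_{r=1}^{∞} Σ_{a=1}^{∞} (−1)^r·h(a)·G_{r−N,t,k}/cosh(π(r+a)/(2t)), Σ_{r=1}^{∞} Σ_{a=1}^{∞} (−1)^r·h(a)·G_{−r−N,t,k}/cosh(π(r+a)/(2t)), Σ_{r=1}^{∞} Σ_{a=1}^{∞} (−1)^r·h(a)·G_{−r−N,t,k}/cosh(π(r−a)/(2t)); and the four triple sums Σ_{r=1}^{∞} Σ_{a=1}^{∞} Σ_{m=0}^{∞} (−1)^m·(2m+1)·h(a)·e^{−πt(2m+1)}·G_{r−N,t,k}/(t^2(2m+1)^2+(r−a)^2), the same with (r+a)^2 in place of (r−a)^2, and the two analogous triple sums with G_{−r−N,t,k} in place of G_{r−N,t,k}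 (with denominators t^2(2m+1)^2+(r+a)^2 and t^2(2m+1)^2+(r−a)^2 respectively). -/
import Mathlib

noncomputable def uu (M t : ℝ) : ℝ := Real.sqrt ((Real.sqrt (M ^ 2 + t ^ 2) + M) / 2)

noncomputable def vv (M t : ℝ) : ℝ := Real.sqrt ((Real.sqrt (M ^ 2 + t ^ 2) - M) / 2)

/-- The quantity `G_{M,t,k}`. -/
noncomputable def Gf (M t : ℝ) (k : ℕ) : ℝ :=
  ((M ^ 2 * uu M t - t ^ 2 * uu M t - 2 * M * t * vv M t) *
      Real.sin (2 * Real.pi * vv M t / Real.sqrt k)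
    + (2 * M * t * uu M t + M ^ 2 * vv M t - t ^ 2 * vv M t) *
      Real.sinh (2 * Real.pi * uu M t / Real.sqrt k)) /
  ((M ^ 2 + t ^ 2) ^ 2 * Real.sqrt (M ^ 2 + t ^ 2) *
    ((Real.sinh (Real.pi * uu M t / Real.sqrt k)) ^ 2
      + (Real.sin (Real.pi * vv M t / Real.sqrt k)) ^ 2))


lemma summable_pow32 : Summable fun n : ℕ => (((n : ℝ) + 1) * Real.sqrt ((n : ℝ) + 1))⁻¹ := by
  have h0 : Summable fun n : ℕ => ((n : ℝ)) ^ (-(3/2) : ℝ) :=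
    Real.summable_nat_rpow.2 (by norm_num)
  have h1 := (summable_nat_add_iff 1).2 h0
  refine h1.congr fun n => ?_
  have hp : (0 : ℝ) < (n : ℝ) + 1 := by positivity
  push_cast
  rw [Real.rpow_neg hp.le]
  congr 1
  rw [show (3/2 : ℝ) = 1 + (1/2 : ℝ) by norm_num, Real.rpow_add hp, Real.rpow_one,
    ← Real.sqrt_eq_rpow]

lemma summable_exp_abs_int {c : ℝ} (hc : 0 < c) :
    Summable fun d : ℤ => Real.exp (-(c * |(d : ℝ)|)) := by
  have key : Summable fun n : ℕ => Real.exp (-(c * (n : ℝ))) := by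
    have hgeo : Summable fun n : ℕ => Real.exp (-c) ^ n :=
      summable_geometric_of_lt_one (Real.exp_nonneg _)
        (by rw [Real.exp_lt_one_iff]; linarith)
    refine hgeo.congr fun n => ?_
    rw [← Real.exp_nat_mul]
    ring_nf
  refine Summable.of_nat_of_neg ?_ ?_
  · refine key.congr fun n => ?_
    norm_num [abs_of_nonneg]
  · refine key.congr fun n => ?_
    push_cast
    rw [abs_neg, abs_of_nonneg (by positivity : (0:ℝ) ≤ (n:ℝ))]

lemma summable_inv_sq_int {t : ℝ} (ht : 0 < t) :
    Summable fun d : ℤ => (t ^ 2 + (d : ℝ) ^ 2)⁻¹ := by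
  have key : Summable fun n : ℕ => (t ^ 2 + (n : ℝ) ^ 2)⁻¹ := by
    have h0 : Summable fun n : ℕ => ((n : ℝ)) ^ (-(2 : ℝ)) :=
      Real.summable_nat_rpow.2 (by norm_num)
    have h1 := ((summable_nat_add_iff 1).2 h0).mul_left (2 + 2 / t ^ 2)
    refine Summable.of_nonneg_of_le (fun n => by positivity) (fun n => ?_) h1
    have hp : (0 : ℝ) < ((n : ℝ) + 1) := by positivity
    have hcast : ((n + 1 : ℕ) : ℝ) = (n : ℝ) + 1 := by push_cast; ring
    rw [hcast, show (-(2:ℝ)) = -(((2:ℕ):ℝ)) by norm_num, Real.rpow_neg hp.le, Real.rpow_natCast]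
    have hb : ((n : ℝ) + 1) ^ 2 ≤ (2 + 2 / t ^ 2) * (t ^ 2 + (n : ℝ) ^ 2) := by
      have h2 : (0:ℝ) ≤ 2 / t ^ 2 * (n : ℝ) ^ 2 := by positivity
      have ht2 : 2 / t ^ 2 * t ^ 2 = 2 := by field_simp
      nlinarith [sq_nonneg ((n : ℝ) - 1)]
    rw [mul_comm (2 + 2 / t ^ 2)]
    rw [← div_le_iff₀ (by positivity : (0:ℝ) < t ^ 2 + (n:ℝ)^2)] at hb
    calc (t ^ 2 + (n : ℝ) ^ 2)⁻¹ = ((n:ℝ)+1)^2 / (t^2+(n:ℝ)^2) * (((n:ℝ)+1)^2)⁻¹ := by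
          field_simp
      _ ≤ (2 + 2/t^2) * (((n:ℝ)+1)^2)⁻¹ := by
          apply mul_le_mul_of_nonneg_right hb (by positivity)
      _ = (((n:ℝ)+1)^2)⁻¹ * (2 + 2/t^2) := by ring
  refine Summable.of_nat_of_neg ?_ ?_
  · refine key.congr fun n => ?_; norm_num
  · refine key.congr fun n => ?_; push_cast; rw [neg_pow]; norm_num

lemma summable_em {t : ℝ} (ht : 0 < t) :
    Summable fun m : ℕ => (2 * (m : ℝ) + 1) * Real.exp (-(Real.pi * t * (2 * (m : ℝ) + 1))) := by
  set q := Real.exp (-(Real.pi * t)) with hq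
  have hq0 : 0 < q := Real.exp_pos _
  have hq1 : q < 1 := by rw [hq, Real.exp_lt_one_iff]; nlinarith [Real.pi_pos]
  have hqq : ‖q ^ 2‖ < 1 := by
    rw [Real.norm_eq_abs, abs_of_pos (by positivity)]; nlinarith
  have h1 : Summable fun m : ℕ => (m : ℝ) ^ 1 * (q ^ 2) ^ m :=
    summable_pow_mul_geometric_of_norm_lt_one 1 hqq
  have h2 : Summable fun m : ℕ => (q ^ 2) ^ m :=
    summable_geometric_of_lt_one (by positivity) (by nlinarith)
  have h3 := ((h1.mul_left 2).add h2).mul_left q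
  refine h3.congr fun m => ?_
  have he : Real.exp (-(Real.pi * t * (2 * (m : ℝ) + 1))) = q ^ (2 * m + 1) := by
    rw [show -(Real.pi * t * (2 * (m : ℝ) + 1)) = ((2 * m + 1 : ℕ) : ℝ) * (-(Real.pi * t)) by
      push_cast; ring, Real.exp_nat_mul]
  rw [he, show q ^ (2 * m + 1) = (q ^ 2) ^ m * q from by rw [pow_succ, pow_mul]]
  push_cast
  ring

lemma summable_abs_of_le_comp {α β : Type*} (f : α → ℝ) (H : β → ℝ) (e : α → β)
    (he : Function.Injective e) (hH : Summable H) (hle : ∀ a, |f a| ≤ H (e a)) :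
    Summable fun a => |f a| :=
  Summable.of_nonneg_of_le (fun a => abs_nonneg _) hle (hH.comp_injective he)

lemma inv_cosh_le (x : ℝ) : (Real.cosh x)⁻¹ ≤ 2 * Real.exp (-|x|) := by
  have h1 : Real.exp |x| / 2 ≤ Real.cosh x := by
    rw [← Real.cosh_abs, Real.cosh_eq]
    have := Real.exp_nonneg (-|x|)
    linarith
  have h2 : (0:ℝ) < Real.exp |x| / 2 := by positivity
  calc (Real.cosh x)⁻¹ ≤ (Real.exp |x| / 2)⁻¹ := inv_anti₀ h2 h1
    _ = 2 * Real.exp (-|x|) := by rw [Real.exp_neg]; field_simp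

lemma mul3_le {a b c a' b' c' : ℝ} (h1 : a ≤ a') (h2 : b ≤ b') (h3 : c ≤ c')
    (hb : 0 ≤ b) (hc : 0 ≤ c) (ha' : 0 ≤ a') (hb' : 0 ≤ b') : a * b * c ≤ a' * b' * c' :=
  mul_le_mul (mul_le_mul h1 h2 hb ha') h3 hc (mul_nonneg ha' hb')

lemma habsA (M t u v : ℝ) (hu0 : 0 ≤ u) (hv0 : 0 ≤ v) :
    |M ^ 2 * u - t ^ 2 * u - 2 * M * t * v| ≤ (M ^ 2 + t ^ 2) * u + (M ^ 2 + t ^ 2) * v := by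
  rw [abs_le]
  constructor <;>
    nlinarith [mul_nonneg hv0 (sq_nonneg (M + t)), mul_nonneg hv0 (sq_nonneg (M - t)),
      mul_nonneg hu0 (sq_nonneg t), mul_nonneg hu0 (sq_nonneg M)]

lemma habsB (M t u v : ℝ) (hu0 : 0 ≤ u) (hv0 : 0 ≤ v) :
    |2 * M * t * u + M ^ 2 * v - t ^ 2 * v| ≤ (M ^ 2 + t ^ 2) * u + (M ^ 2 + t ^ 2) * v := by
  rw [abs_le]
  constructor <;>
    nlinarith [mul_nonneg hu0 (sq_nonneg (M + t)), mul_nonneg hu0 (sq_nonneg (M - t)),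
      mul_nonneg hv0 (sq_nonneg t), mul_nonneg hv0 (sq_nonneg M)]

set_option maxHeartbeats 1000000 in
lemma Gf_bound (t : ℝ) (ht : 0 < t) (k : ℕ) (hk : 1 ≤ k) :
    ∃ C : ℝ, 0 ≤ C ∧ ∀ M : ℝ,
      |Gf M t k| ≤ C / (Real.sqrt (M ^ 2 + t ^ 2) * Real.sqrt (Real.sqrt (M ^ 2 + t ^ 2))) := by
  have hπ : (0:ℝ) < Real.pi := Real.pi_pos
  set s := Real.sqrt (k : ℝ) with hsdef
  have hs1 : (1:ℝ) ≤ s := by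
    rw [hsdef, show (1:ℝ) = Real.sqrt 1 by simp]
    exact Real.sqrt_le_sqrt (by exact_mod_cast hk)
  have hs0 : (0:ℝ) < s := lt_of_lt_of_le one_pos hs1
  refine ⟨8 * s ^ 2 / (Real.pi ^ 2 * t ^ 2) + 4 / t + 8 * s / (Real.pi * t * Real.sqrt t),
    by positivity, fun M => ?_⟩
  set ρ := Real.sqrt (M ^ 2 + t ^ 2) with hρ
  have hρsq : ρ ^ 2 = M ^ 2 + t ^ 2 := Real.sq_sqrt (by positivity)
  have hρt : t ≤ ρ := by
    calc t = Real.sqrt (t ^ 2) := (Real.sqrt_sq ht.le).symm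
      _ ≤ ρ := Real.sqrt_le_sqrt (by nlinarith [sq_nonneg M])
  have hρ0 : (0:ℝ) < ρ := lt_of_lt_of_le ht hρt
  have hMlt : M < ρ := by
    have h1 : M ≤ Real.sqrt (M ^ 2) := by
      rw [Real.sqrt_sq_eq_abs]; exact le_abs_self M
    exact lt_of_le_of_lt h1 (Real.sqrt_lt_sqrt (sq_nonneg M) (by nlinarith))
  have hMgt : -ρ < M := by
    have h1 : -M ≤ Real.sqrt (M ^ 2) := by
      rw [Real.sqrt_sq_eq_abs]; exact neg_le_abs M
    have h2 : Real.sqrt (M ^ 2) < ρ := Real.sqrt_lt_sqrt (sq_nonneg M) (by nlinarith)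
    linarith
  set u := uu M t with hu
  set v := vv M t with hv
  have hu2 : u ^ 2 = (ρ + M) / 2 := by
    rw [hu, uu, ← hρ]; exact Real.sq_sqrt (by linarith)
  have hv2 : v ^ 2 = (ρ - M) / 2 := by
    rw [hv, vv, ← hρ]; exact Real.sq_sqrt (by linarith)
  have hu0 : 0 ≤ u := Real.sqrt_nonneg _
  have hv0 : 0 ≤ v := Real.sqrt_nonneg _
  have hupos : 0 < u := by
    rw [hu, uu, ← hρ]; exact Real.sqrt_pos.2 (by linarith)
  have hsq : Real.sqrt ρ * Real.sqrt ρ = ρ := Real.mul_self_sqrt hρ0.le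
  have hu_le : u ≤ Real.sqrt ρ := by
    rw [hu, uu, ← hρ]; exact Real.sqrt_le_sqrt (by linarith)
  have hv_le : v ≤ Real.sqrt ρ := by
    rw [hv, vv, ← hρ]; exact Real.sqrt_le_sqrt (by linarith)
  have hsρ0 : (0:ℝ) < Real.sqrt ρ := Real.sqrt_pos.2 hρ0
  have hu_lb : t / (2 * Real.sqrt ρ) ≤ u := by
    have h1 : (t / (2 * Real.sqrt ρ)) ^ 2 ≤ u ^ 2 := by
      rw [hu2, div_pow, mul_pow, Real.sq_sqrt hρ0.le]
      rw [div_le_div_iff₀ (by positivity) two_pos]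
      nlinarith
    have h2 : (0:ℝ) ≤ t / (2 * Real.sqrt ρ) := by positivity
    nlinarith [h1, h2, hu0]
  -- notation
  set x := Real.pi * u / s with hx
  have hx0 : 0 < x := by rw [hx]; positivity
  have hsinh_x : x ≤ Real.sinh x := Real.self_le_sinh_iff.2 hx0.le
  have hsinhpos : 0 < Real.sinh x := Real.sinh_pos_iff.2 hx0
  set S := Real.sinh x ^ 2 + Real.sin (Real.pi * v / s) ^ 2 with hS
  have hS_lb : Real.sinh x ^ 2 ≤ S := le_add_of_nonneg_right (sq_nonneg _)
  have hS_pos : 0 < S := lt_of_lt_of_le (by positivity) hS_lb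
  have hcosh_le : Real.cosh x ≤ Real.sinh x + 1 := by
    nlinarith [Real.cosh_sq x, Real.cosh_pos x, hsinhpos]
  -- lower bound on x
  have hyx : Real.pi * t / (2 * s * Real.sqrt ρ) ≤ x := by
    rw [hx, show Real.pi * t / (2 * s * Real.sqrt ρ) = Real.pi * (t / (2 * Real.sqrt ρ)) / s by
      ring]
    gcongr
  have hy0 : (0:ℝ) ≤ Real.pi * t / (2 * s * Real.sqrt ρ) := by positivity
  have hy2 : Real.pi ^ 2 * t ^ 2 / (4 * s ^ 2 * ρ) ≤ Real.sinh x ^ 2 := by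
    have h1 : (Real.pi * t / (2 * s * Real.sqrt ρ)) ^ 2 ≤ Real.sinh x ^ 2 :=
      pow_le_pow_left₀ hy0 (hyx.trans hsinh_x) 2
    calc Real.pi ^ 2 * t ^ 2 / (4 * s ^ 2 * ρ)
        = (Real.pi * t / (2 * s * Real.sqrt ρ)) ^ 2 := by
          rw [div_pow, mul_pow, mul_pow, mul_pow, Real.sq_sqrt hρ0.le]; norm_num
      _ ≤ Real.sinh x ^ 2 := h1
  -- the three pieces
  have hπt0 : Real.pi ^ 2 * t ^ 2 ≠ 0 := by positivity
  have p1 : 2 ≤ 8 * s ^ 2 / (Real.pi ^ 2 * t ^ 2) * ρ * Real.sinh x ^ 2 := by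
    have e1 : 8 * s ^ 2 / (Real.pi ^ 2 * t ^ 2) * ρ * (Real.pi ^ 2 * t ^ 2 / (4 * s ^ 2 * ρ))
        = 2 := by field_simp; ring
    calc (2:ℝ) = 8 * s ^ 2 / (Real.pi ^ 2 * t ^ 2) * ρ *
          (Real.pi ^ 2 * t ^ 2 / (4 * s ^ 2 * ρ)) := e1.symm
      _ ≤ 8 * s ^ 2 / (Real.pi ^ 2 * t ^ 2) * ρ * Real.sinh x ^ 2 := by
          apply mul_le_mul_of_nonneg_left hy2 (by positivity)
  have p2 : 4 * Real.sinh x ^ 2 ≤ 4 / t * ρ * Real.sinh x ^ 2 := by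
    have h42 : (4:ℝ) ≤ 4 / t * ρ := by
      rw [div_mul_eq_mul_div, le_div_iff₀ ht]; linarith
    nlinarith [mul_le_mul_of_nonneg_right h42 (sq_nonneg (Real.sinh x))]
  have p3 : 4 * Real.sinh x ≤ 8 * s / (Real.pi * t * Real.sqrt t) * ρ * Real.sinh x ^ 2 := by
    have hst : Real.sqrt t ≤ Real.sqrt ρ := Real.sqrt_le_sqrt hρt
    have hst0 : (0:ℝ) < Real.sqrt t := Real.sqrt_pos.2 ht
    have e3 : 8 * s / (Real.pi * t * Real.sqrt t) * ρ * (Real.pi * t / (2 * s * Real.sqrt ρ))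
        = 4 * ρ / (Real.sqrt t * Real.sqrt ρ) := by field_simp; ring
    have h4 : (4:ℝ) ≤ 4 * ρ / (Real.sqrt t * Real.sqrt ρ) := by
      rw [le_div_iff₀ (by positivity)]
      nlinarith [mul_le_mul_of_nonneg_right hst hsρ0.le, hsq]
    have h5 : (4:ℝ) ≤ 8 * s / (Real.pi * t * Real.sqrt t) * ρ * Real.sinh x := by
      calc (4:ℝ) ≤ 4 * ρ / (Real.sqrt t * Real.sqrt ρ) := h4
        _ = 8 * s / (Real.pi * t * Real.sqrt t) * ρ * (Real.pi * t / (2 * s * Real.sqrt ρ)) :=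
            e3.symm
        _ ≤ 8 * s / (Real.pi * t * Real.sqrt t) * ρ * Real.sinh x := by
            apply mul_le_mul_of_nonneg_left (hyx.trans hsinh_x) (by positivity)
    nlinarith [mul_le_mul_of_nonneg_right h5 hsinhpos.le]
  set C := 8 * s ^ 2 / (Real.pi ^ 2 * t ^ 2) + 4 / t + 8 * s / (Real.pi * t * Real.sqrt t)
    with hC
  have hC0 : 0 ≤ C := by rw [hC]; positivity
  have hS3 : C * ρ * Real.sinh x ^ 2 ≤ C * ρ * S := by
    rw [mul_assoc, mul_assoc]
    exact mul_le_mul_of_nonneg_left (mul_le_mul_of_nonneg_left hS_lb hρ0.le) hC0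
  have key : 2 * (1 + Real.sinh (2 * x)) ≤ C * ρ * S := by
    have hsinh2 := Real.sinh_two_mul x
    have pc : 4 * Real.sinh x * Real.cosh x ≤ 4 * Real.sinh x ^ 2 + 4 * Real.sinh x := by
      have := mul_le_mul_of_nonneg_left hcosh_le (by positivity : (0:ℝ) ≤ 4 * Real.sinh x)
      linarith [this]
    calc 2 * (1 + Real.sinh (2 * x)) = 2 + 4 * Real.sinh x * Real.cosh x := by
          rw [hsinh2]; ring
      _ ≤ 2 + (4 * Real.sinh x ^ 2 + 4 * Real.sinh x) := by linarith [pc]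
      _ ≤ 8 * s ^ 2 / (Real.pi ^ 2 * t ^ 2) * ρ * Real.sinh x ^ 2
          + 4 / t * ρ * Real.sinh x ^ 2
          + 8 * s / (Real.pi * t * Real.sqrt t) * ρ * Real.sinh x ^ 2 := by
          linarith [p1, p2, p3]
      _ = C * ρ * Real.sinh x ^ 2 := by rw [hC]; ring
      _ ≤ C * ρ * S := hS3
  -- numerator bound
  have hsinh2x0 : 0 ≤ Real.sinh (2 * x) := Real.sinh_nonneg_iff.2 (by positivity)
  have hA := habsA M t u v hu0 hv0
  have hB := habsB M t u v hu0 hv0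
  have hP : (M ^ 2 + t ^ 2) * u + (M ^ 2 + t ^ 2) * v ≤ 2 * ρ ^ 2 * Real.sqrt ρ := by
    have hq : (0:ℝ) ≤ M ^ 2 + t ^ 2 := by positivity
    have h1 := mul_le_mul_of_nonneg_left hu_le hq
    have h2 := mul_le_mul_of_nonneg_left hv_le hq
    calc (M ^ 2 + t ^ 2) * u + (M ^ 2 + t ^ 2) * v
        ≤ (M ^ 2 + t ^ 2) * Real.sqrt ρ + (M ^ 2 + t ^ 2) * Real.sqrt ρ := by linarith
      _ = 2 * ρ ^ 2 * Real.sqrt ρ := by rw [← hρsq]; ring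
  -- assemble
  have hDpos : 0 < (M ^ 2 + t ^ 2) ^ 2 * ρ * S :=
    mul_pos (mul_pos (by positivity) hρ0) hS_pos
  have hP0 : (0:ℝ) ≤ (M ^ 2 + t ^ 2) * u + (M ^ 2 + t ^ 2) * v := by positivity
  have hsin1 : |Real.sin (2 * Real.pi * v / s)| ≤ 1 :=
    abs_le.mpr ⟨Real.neg_one_le_sin _, Real.sin_le_one _⟩
  have h2x : 2 * Real.pi * u / s = 2 * x := by rw [hx]; ring
  have hNum : |(M ^ 2 * u - t ^ 2 * u - 2 * M * t * v) * Real.sin (2 * Real.pi * v / s)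
      + (2 * M * t * u + M ^ 2 * v - t ^ 2 * v) * Real.sinh (2 * Real.pi * u / s)|
      ≤ 2 * ρ ^ 2 * Real.sqrt ρ * (1 + Real.sinh (2 * x)) := by
    rw [h2x]
    calc |(M ^ 2 * u - t ^ 2 * u - 2 * M * t * v) * Real.sin (2 * Real.pi * v / s)
        + (2 * M * t * u + M ^ 2 * v - t ^ 2 * v) * Real.sinh (2 * x)|
        ≤ |(M ^ 2 * u - t ^ 2 * u - 2 * M * t * v) * Real.sin (2 * Real.pi * v / s)|
          + |(2 * M * t * u + M ^ 2 * v - t ^ 2 * v) * Real.sinh (2 * x)| := abs_add_le _ _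
      _ = |M ^ 2 * u - t ^ 2 * u - 2 * M * t * v| * |Real.sin (2 * Real.pi * v / s)|
          + |2 * M * t * u + M ^ 2 * v - t ^ 2 * v| * |Real.sinh (2 * x)| := by
          rw [abs_mul, abs_mul]
      _ ≤ ((M ^ 2 + t ^ 2) * u + (M ^ 2 + t ^ 2) * v) * 1
          + ((M ^ 2 + t ^ 2) * u + (M ^ 2 + t ^ 2) * v) * Real.sinh (2 * x) := by
          rw [abs_of_nonneg hsinh2x0]
          exact add_le_add (mul_le_mul hA hsin1 (abs_nonneg _) hP0)
            (mul_le_mul hB le_rfl hsinh2x0 hP0)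
      _ = ((M ^ 2 + t ^ 2) * u + (M ^ 2 + t ^ 2) * v) * (1 + Real.sinh (2 * x)) := by ring
      _ ≤ 2 * ρ ^ 2 * Real.sqrt ρ * (1 + Real.sinh (2 * x)) := by
          apply mul_le_mul_of_nonneg_right hP (by linarith [hsinh2x0])
  simp only [Gf]
  rw [← hu, ← hv, ← hρ, ← hsdef, ← hx, ← hS]
  rw [abs_div, abs_of_pos hDpos, div_le_div_iff₀ hDpos (by positivity)]
  calc |(M ^ 2 * u - t ^ 2 * u - 2 * M * t * v) * Real.sin (2 * Real.pi * v / s)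
      + (2 * M * t * u + M ^ 2 * v - t ^ 2 * v) * Real.sinh (2 * Real.pi * u / s)|
      * (ρ * Real.sqrt ρ)
      ≤ 2 * ρ ^ 2 * Real.sqrt ρ * (1 + Real.sinh (2 * x)) * (ρ * Real.sqrt ρ) :=
        mul_le_mul_of_nonneg_right hNum (by positivity)
    _ = ρ ^ 4 * (2 * (1 + Real.sinh (2 * x))) := by
        rw [show 2 * ρ ^ 2 * Real.sqrt ρ * (1 + Real.sinh (2 * x)) * (ρ * Real.sqrt ρ)
          = Real.sqrt ρ * Real.sqrt ρ * (ρ ^ 3 * (2 * (1 + Real.sinh (2 * x)))) by ring, hsq]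
        ring
    _ ≤ ρ ^ 4 * (C * ρ * S) := by
        apply mul_le_mul_of_nonneg_left key (by positivity)
    _ = (8 * s ^ 2 / (Real.pi ^ 2 * t ^ 2) + 4 / t + 8 * s / (Real.pi * t * Real.sqrt t))
        * ((M ^ 2 + t ^ 2) ^ 2 * ρ * S) := by
        rw [hC, ← hρsq]; ring

lemma summable_pow32' : Summable fun n : ℕ => (((n : ℝ) + 1) * Real.sqrt ((n : ℝ) + 1))⁻¹ := by
  have h0 : Summable fun n : ℕ => ((n : ℝ)) ^ (-(3/2) : ℝ) :=
    Real.summable_nat_rpow.2 (by norm_num)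
  have h1 := (summable_nat_add_iff 1).2 h0
  refine h1.congr fun n => ?_
  have hp : (0 : ℝ) < (n : ℝ) + 1 := by positivity
  push_cast
  rw [Real.rpow_neg hp.le]
  congr 1
  rw [show (3/2 : ℝ) = 1 + (1/2 : ℝ) by norm_num, Real.rpow_add hp, Real.rpow_one,
    ← Real.sqrt_eq_rpow]

lemma Gf_row_bound (t : ℝ) (ht : 0 < t) (k N : ℕ) (hk : 1 ≤ k) (hN : 1 ≤ N) :
    ∃ g : ℕ → ℝ, Summable g ∧ (∀ r, 0 ≤ g r) ∧
      (∀ r : ℕ, |Gf ((r : ℝ) + 1 - N) t k| ≤ g r) ∧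
      (∀ r : ℕ, |Gf (-((r : ℝ) + 1) - N) t k| ≤ g r) := by
  obtain ⟨C, hC0, hC⟩ := Gf_bound t ht k hk
  set c := t / ((N : ℝ) + t) with hc
  have hN0 : (0:ℝ) ≤ (N : ℝ) := by positivity
  have hc0 : 0 < c := by rw [hc]; positivity
  have hc1 : c ≤ 1 := by
    rw [hc, div_le_one (by positivity)]; linarith
  have hmono : ∀ r : ℕ, ∀ M : ℝ, c * ((r : ℝ) + 1) ≤ Real.sqrt (M ^ 2 + t ^ 2) →
      |Gf M t k| ≤ C / (c * ((r : ℝ) + 1) * Real.sqrt (c * ((r : ℝ) + 1))) := by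
    intro r M hle
    refine le_trans (hC M) ?_
    set ρ := Real.sqrt (M ^ 2 + t ^ 2) with hρ
    have ha0 : 0 < c * ((r : ℝ) + 1) := by positivity
    have hprod : c * ((r : ℝ) + 1) * Real.sqrt (c * ((r : ℝ) + 1)) ≤ ρ * Real.sqrt ρ :=
      mul_le_mul hle (Real.sqrt_le_sqrt hle) (Real.sqrt_nonneg _) (lt_of_lt_of_le ha0 hle).le
    exact div_le_div_of_nonneg_left hC0 (by positivity) hprod
  refine ⟨fun r => C / (c * ((r : ℝ) + 1) * Real.sqrt (c * ((r : ℝ) + 1))), ?_,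
    fun r => by positivity, ?_, ?_⟩
  · have hs := summable_pow32'.mul_left (C / (c * Real.sqrt c))
    refine hs.congr fun r => ?_
    have h1 : (0:ℝ) < (r : ℝ) + 1 := by positivity
    have hsc : (0:ℝ) < Real.sqrt c := Real.sqrt_pos.2 hc0
    have hs1 : (0:ℝ) < Real.sqrt ((r : ℝ) + 1) := Real.sqrt_pos.2 h1
    rw [Real.sqrt_mul hc0.le]
    rw [show c * ((r : ℝ) + 1) * (Real.sqrt c * Real.sqrt ((r : ℝ) + 1))
      = (c * Real.sqrt c) * (((r : ℝ) + 1) * Real.sqrt ((r : ℝ) + 1)) by ring]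
    rw [div_eq_mul_inv, div_eq_mul_inv]; simp only [mul_inv]; ring
  · intro r
    apply hmono
    have hρt : t ≤ Real.sqrt (((r : ℝ) + 1 - N) ^ 2 + t ^ 2) := by
      calc t = Real.sqrt (t ^ 2) := (Real.sqrt_sq ht.le).symm
        _ ≤ _ := Real.sqrt_le_sqrt (by nlinarith [sq_nonneg ((r : ℝ) + 1 - N)])
    have hρM : (r : ℝ) + 1 - N ≤ Real.sqrt (((r : ℝ) + 1 - N) ^ 2 + t ^ 2) := by
      calc (r : ℝ) + 1 - N ≤ |(r : ℝ) + 1 - N| := le_abs_self _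
        _ = Real.sqrt (((r : ℝ) + 1 - N) ^ 2) := (Real.sqrt_sq_eq_abs _).symm
        _ ≤ _ := Real.sqrt_le_sqrt (by nlinarith [sq_nonneg t])
    set ρ := Real.sqrt (((r : ℝ) + 1 - N) ^ 2 + t ^ 2) with hρ
    have hρ0 : 0 < ρ := lt_of_lt_of_le ht hρt
    rw [hc, div_mul_eq_mul_div, div_le_iff₀ (by positivity)]
    have e1 : t * ((r : ℝ) + 1 - N) ≤ t * ρ := mul_le_mul_of_nonneg_left hρM ht.le
    have e2 : t * (N : ℝ) ≤ ρ * (N : ℝ) := mul_le_mul_of_nonneg_right hρt hN0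
    nlinarith [e1, e2]
  · intro r
    apply hmono
    have h1 : c * ((r : ℝ) + 1) ≤ (r : ℝ) + 1 := by
      nlinarith [hc1, hc0]
    have h2 : (r : ℝ) + 1 ≤ |(-((r : ℝ) + 1) - N)| := by
      rw [abs_of_nonpos (by linarith)]; linarith
    calc c * ((r : ℝ) + 1) ≤ (r : ℝ) + 1 := h1
      _ ≤ |(-((r : ℝ) + 1) - N)| := h2
      _ = Real.sqrt ((-((r : ℝ) + 1) - N) ^ 2) := (Real.sqrt_sq_eq_abs _).symm
      _ ≤ _ := Real.sqrt_le_sqrt (by nlinarith [sq_nonneg t])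

lemma cosh_term_bound {c hval gval Mv grv Y w : ℝ} (n : ℕ) (hh : |hval| ≤ Mv)
    (hG : |gval| ≤ grv) (hM0 : 0 ≤ Mv) (hg0 : 0 ≤ grv) (hw : |Y| = c * |w|) :
    |(-1 : ℝ) ^ n * hval * gval / Real.cosh Y| ≤ Mv * grv * (2 * Real.exp (-(c * |w|))) := by
  rw [div_eq_mul_inv, abs_mul, abs_mul, abs_mul, abs_pow, abs_neg, abs_one, one_pow, one_mul,
    abs_inv, abs_of_pos (Real.cosh_pos Y)]
  refine mul3_le hh hG ?_ (abs_nonneg _) (inv_nonneg.2 (Real.cosh_pos Y).le) hM0 hg0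
  rw [← hw]
  exact inv_cosh_le Y

lemma triple_term_bound {hval gval Mv grv t w X : ℝ} (m : ℕ)
    (hh : |hval| ≤ Mv) (hG : |gval| ≤ grv) (hM0 : 0 ≤ Mv) (hg0 : 0 ≤ grv) (ht : 0 < t)
    (hw : w ^ 2 = X ^ 2) :
    |(-1 : ℝ) ^ m * (2 * (m : ℝ) + 1) * hval * Real.exp (-(Real.pi * t * (2 * (m : ℝ) + 1)))
        * gval / (t ^ 2 * (2 * (m : ℝ) + 1) ^ 2 + X ^ 2)|
      ≤ Mv * grv * ((2 * (m : ℝ) + 1) * Real.exp (-(Real.pi * t * (2 * (m : ℝ) + 1)))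
        * (t ^ 2 + w ^ 2)⁻¹) := by
  have hm1 : (0:ℝ) ≤ 2 * (m : ℝ) + 1 := by positivity
  have hD0 : 0 < t ^ 2 * (2 * (m : ℝ) + 1) ^ 2 + X ^ 2 := by positivity
  have hge : t ^ 2 + w ^ 2 ≤ t ^ 2 * (2 * (m : ℝ) + 1) ^ 2 + X ^ 2 := by
    rw [hw]
    nlinarith [mul_nonneg (sq_nonneg t) (show (0:ℝ) ≤ 4 * (m : ℝ) ^ 2 + 4 * m by positivity)]
  have hinv : (t ^ 2 * (2 * (m : ℝ) + 1) ^ 2 + X ^ 2)⁻¹ ≤ (t ^ 2 + w ^ 2)⁻¹ :=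
    inv_anti₀ (by positivity) hge
  rw [div_eq_mul_inv, abs_mul, abs_mul, abs_mul, abs_mul, abs_mul, abs_pow, abs_neg, abs_one,
    one_pow, one_mul, abs_inv, abs_of_pos hD0, abs_of_pos (Real.exp_pos _), abs_of_nonneg hm1]
  calc (2 * (m : ℝ) + 1) * |hval| * Real.exp (-(Real.pi * t * (2 * (m : ℝ) + 1))) * |gval|
        * (t ^ 2 * (2 * (m : ℝ) + 1) ^ 2 + X ^ 2)⁻¹
      = |hval| * |gval| * ((2 * (m : ℝ) + 1) * Real.exp (-(Real.pi * t * (2 * (m : ℝ) + 1)))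
        * (t ^ 2 * (2 * (m : ℝ) + 1) ^ 2 + X ^ 2)⁻¹) := by ring
    _ ≤ Mv * grv * ((2 * (m : ℝ) + 1) * Real.exp (-(Real.pi * t * (2 * (m : ℝ) + 1)))
        * (t ^ 2 + w ^ 2)⁻¹) := by
        refine mul3_le hh hG ?_ (abs_nonneg _) (by positivity) hM0 hg0
        exact mul_le_mul_of_nonneg_left hinv (by positivity)

set_option maxHeartbeats 2000000 in
/-- Lemma 13 of the paper. -/
theorem statement8
    (h : ℕ → ℝ) (M : ℝ) (hM : ∀ m : ℕ, 1 ≤ m → |h m| ≤ M)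
    (habs : ∀ z : ℂ, Summable (fun r : ℕ => ‖(h (r + 1) : ℂ) / (((r : ℂ) + 1) + z)‖))
    (N k : ℕ) (hN : 1 ≤ N) (hk : 1 ≤ k) (t : ℝ) (ht : 0 < t) :
    Summable (fun p : ℕ × ℕ =>
      |(-1 : ℝ) ^ (p.1 + 1) * h (p.2 + 1) * Gf (((p.1 : ℝ) + 1) - N) t k /
        Real.cosh (Real.pi * (((p.1 : ℝ) + 1) - ((p.2 : ℝ) + 1)) / (2 * t))|) ∧
    Summable (fun p : ℕ × ℕ =>
      |(-1 : ℝ) ^ (p.1 + 1) * h (p.2 + 1) * Gf (((p.1 : ℝ) + 1) - N) t k /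
        Real.cosh (Real.pi * (((p.1 : ℝ) + 1) + ((p.2 : ℝ) + 1)) / (2 * t))|) ∧
    Summable (fun p : ℕ × ℕ =>
      |(-1 : ℝ) ^ (p.1 + 1) * h (p.2 + 1) * Gf (-((p.1 : ℝ) + 1) - N) t k /
        Real.cosh (Real.pi * (((p.1 : ℝ) + 1) + ((p.2 : ℝ) + 1)) / (2 * t))|) ∧
    Summable (fun p : ℕ × ℕ =>
      |(-1 : ℝ) ^ (p.1 + 1) * h (p.2 + 1) * Gf (-((p.1 : ℝ) + 1) - N) t k /
        Real.cosh (Real.pi * (((p.1 : ℝ) + 1) - ((p.2 : ℝ) + 1)) / (2 * t))|) ∧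
    Summable (fun p : ℕ × ℕ × ℕ =>
      |(-1 : ℝ) ^ p.2.2 * (2 * (p.2.2 : ℝ) + 1) * h (p.2.1 + 1) *
        Real.exp (-(Real.pi * t * (2 * (p.2.2 : ℝ) + 1))) * Gf (((p.1 : ℝ) + 1) - N) t k /
        (t ^ 2 * (2 * (p.2.2 : ℝ) + 1) ^ 2 + (((p.1 : ℝ) + 1) - ((p.2.1 : ℝ) + 1)) ^ 2)|) ∧
    Summable (fun p : ℕ × ℕ × ℕ =>
      |(-1 : ℝ) ^ p.2.2 * (2 * (p.2.2 : ℝ) + 1) * h (p.2.1 + 1) *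
        Real.exp (-(Real.pi * t * (2 * (p.2.2 : ℝ) + 1))) * Gf (((p.1 : ℝ) + 1) - N) t k /
        (t ^ 2 * (2 * (p.2.2 : ℝ) + 1) ^ 2 + (((p.1 : ℝ) + 1) + ((p.2.1 : ℝ) + 1)) ^ 2)|) ∧
    Summable (fun p : ℕ × ℕ × ℕ =>
      |(-1 : ℝ) ^ p.2.2 * (2 * (p.2.2 : ℝ) + 1) * h (p.2.1 + 1) *
        Real.exp (-(Real.pi * t * (2 * (p.2.2 : ℝ) + 1))) * Gf (-((p.1 : ℝ) + 1) - N) t k /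
        (t ^ 2 * (2 * (p.2.2 : ℝ) + 1) ^ 2 + (((p.1 : ℝ) + 1) + ((p.2.1 : ℝ) + 1)) ^ 2)|) ∧
    Summable (fun p : ℕ × ℕ × ℕ =>
      |(-1 : ℝ) ^ p.2.2 * (2 * (p.2.2 : ℝ) + 1) * h (p.2.1 + 1) *
        Real.exp (-(Real.pi * t * (2 * (p.2.2 : ℝ) + 1))) * Gf (-((p.1 : ℝ) + 1) - N) t k /
        (t ^ 2 * (2 * (p.2.2 : ℝ) + 1) ^ 2 + (((p.1 : ℝ) + 1) - ((p.2.1 : ℝ) + 1)) ^ 2)|) := by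
  clear habs
  obtain ⟨g, hgS, hg0, hg1, hg2⟩ := Gf_row_bound t ht k N hk hN
  have hM0 : (0:ℝ) ≤ M := le_trans (abs_nonneg _) (hM 1 le_rfl)
  have hha : ∀ a : ℕ, |h (a + 1)| ≤ M := fun a => hM (a + 1) (Nat.le_add_left 1 a)
  set c := Real.pi / (2 * t) with hcdef
  have hc0 : 0 < c := by rw [hcdef]; positivity
  have hH2 : Summable fun q : ℕ × ℤ => M * g q.1 * (2 * Real.exp (-(c * |(q.2 : ℝ)|))) :=
    Summable.mul_of_nonneg (hgS.mul_left M) ((summable_exp_abs_int hc0).mul_left 2)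
      (fun r => mul_nonneg hM0 (hg0 r)) (fun d => by positivity)
  have hH3 : Summable fun q : ℕ × ℕ × ℤ =>
      M * g q.1 * ((2 * (q.2.1 : ℝ) + 1) * Real.exp (-(Real.pi * t * (2 * (q.2.1 : ℝ) + 1)))
        * (t ^ 2 + (q.2.2 : ℝ) ^ 2)⁻¹) :=
    Summable.mul_of_nonneg (hgS.mul_left M)
      (Summable.mul_of_nonneg (summable_em ht) (summable_inv_sq_int ht)
        (fun m => by positivity) (fun d => by positivity))
      (fun r => mul_nonneg hM0 (hg0 r)) (fun q => by positivity)
  have hinj_sub : Function.Injective (fun p : ℕ × ℕ => (p.1, (p.1 : ℤ) - (p.2 : ℤ))) := by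
    intro p q hpq
    simp only [Prod.mk.injEq] at hpq
    obtain ⟨h1, h2⟩ := hpq
    exact Prod.ext h1 (by omega)
  have hinj_add : Function.Injective (fun p : ℕ × ℕ => (p.1, (p.1 : ℤ) + (p.2 : ℤ) + 2)) := by
    intro p q hpq
    simp only [Prod.mk.injEq] at hpq
    obtain ⟨h1, h2⟩ := hpq
    exact Prod.ext h1 (by omega)
  have hinj3_sub : Function.Injective
      (fun p : ℕ × ℕ × ℕ => (p.1, (p.2.2, (p.1 : ℤ) - (p.2.1 : ℤ)))) := by
    intro p q hpq
    simp only [Prod.mk.injEq] at hpq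
    obtain ⟨h1, h2, h3⟩ := hpq
    exact Prod.ext h1 (Prod.ext (by omega) h2)
  have hinj3_add : Function.Injective
      (fun p : ℕ × ℕ × ℕ => (p.1, (p.2.2, (p.1 : ℤ) + (p.2.1 : ℤ) + 2))) := by
    intro p q hpq
    simp only [Prod.mk.injEq] at hpq
    obtain ⟨h1, h2, h3⟩ := hpq
    exact Prod.ext h1 (Prod.ext (by omega) h2)
  have habs_sub : ∀ p : ℕ × ℕ,
      |Real.pi * (((p.1 : ℝ) + 1) - ((p.2 : ℝ) + 1)) / (2 * t)|
        = c * |((((p.1 : ℤ) - (p.2 : ℤ)) : ℤ) : ℝ)| := by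
    intro p
    rw [show Real.pi * (((p.1 : ℝ) + 1) - ((p.2 : ℝ) + 1)) / (2 * t)
      = Real.pi * ((p.1 : ℝ) - (p.2 : ℝ)) / (2 * t) by ring]
    rw [abs_div, abs_mul, abs_of_pos Real.pi_pos,
      abs_of_pos (by positivity : (0:ℝ) < 2 * t), hcdef]
    push_cast
    ring
  have habs_add : ∀ p : ℕ × ℕ,
      |Real.pi * (((p.1 : ℝ) + 1) + ((p.2 : ℝ) + 1)) / (2 * t)|
        = c * |((((p.1 : ℤ) + (p.2 : ℤ) + 2) : ℤ) : ℝ)| := by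
    intro p
    rw [show Real.pi * (((p.1 : ℝ) + 1) + ((p.2 : ℝ) + 1)) / (2 * t)
      = Real.pi * ((p.1 : ℝ) + (p.2 : ℝ) + 2) / (2 * t) by ring]
    rw [abs_div, abs_mul, abs_of_pos Real.pi_pos,
      abs_of_pos (by positivity : (0:ℝ) < 2 * t), hcdef]
    push_cast
    ring
  have hsq_sub : ∀ p : ℕ × ℕ × ℕ,
      (((((p.1 : ℤ) - (p.2.1 : ℤ)) : ℤ) : ℝ)) ^ 2
        = ((((p.1 : ℝ) + 1) - ((p.2.1 : ℝ) + 1))) ^ 2 := by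
    intro p; push_cast; ring
  have hsq_add : ∀ p : ℕ × ℕ × ℕ,
      (((((p.1 : ℤ) + (p.2.1 : ℤ) + 2) : ℤ) : ℝ)) ^ 2
        = ((((p.1 : ℝ) + 1) + ((p.2.1 : ℝ) + 1))) ^ 2 := by
    intro p; push_cast; ring
  refine ⟨?_, ?_, ?_, ?_, ?_, ?_, ?_, ?_⟩
  · refine summable_abs_of_le_comp _ _ _ hinj_sub hH2 fun p => ?_
    exact cosh_term_bound (p.1 + 1) (hha p.2) (hg1 p.1) hM0 (hg0 p.1) (habs_sub p)
  · refine summable_abs_of_le_comp _ _ _ hinj_add hH2 fun p => ?_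
    exact cosh_term_bound (p.1 + 1) (hha p.2) (hg1 p.1) hM0 (hg0 p.1) (habs_add p)
  · refine summable_abs_of_le_comp _ _ _ hinj_add hH2 fun p => ?_
    exact cosh_term_bound (p.1 + 1) (hha p.2) (hg2 p.1) hM0 (hg0 p.1) (habs_add p)
  · refine summable_abs_of_le_comp _ _ _ hinj_sub hH2 fun p => ?_
    exact cosh_term_bound (p.1 + 1) (hha p.2) (hg2 p.1) hM0 (hg0 p.1) (habs_sub p)
  · refine summable_abs_of_le_comp _ _ _ hinj3_sub hH3 fun p => ?_
    exact triple_term_bound p.2.2 (hha p.2.1) (hg1 p.1) hM0 (hg0 p.1) ht (hsq_sub p)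
  · refine summable_abs_of_le_comp _ _ _ hinj3_add hH3 fun p => ?_
    exact triple_term_bound p.2.2 (hha p.2.1) (hg1 p.1) hM0 (hg0 p.1) ht (hsq_add p)
  · refine summable_abs_of_le_comp _ _ _ hinj3_add hH3 fun p => ?_
    exact triple_term_bound p.2.2 (hha p.2.1) (hg2 p.1) hM0 (hg0 p.1) ht (hsq_add p)
  · refine summable_abs_of_le_comp _ _ _ hinj3_sub hH3 fun p => ?_
    exact triple_term_bound p.2.2 (hha p.2.1) (hg2 p.1) hM0 (hg0 p.1) ht (hsq_sub p)
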